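/- arXiv:math/9306201 — 5 statements merged into one kernel-verified Lean document; each statement's English description precedes it below -/
import Mathlib

section
/- Let G be a group generated by two elements a and b with orders dividing l and m respectively, such that the order of a*b divides n, where l, m, n are pairwise coprime natural numbers. Then G has no nontrivial abelian quotient; equivalently, the abelianization of G is trivial. -/
theorem stmt_0 {G : Type*} [Group G] (a b : G) (l m n : ℕ)
    (hgen : Subgroup.closure ({a, b} : Set G) = ⊤)
    (ha : orderOf a ∣ l) (hb : orderOf b ∣ m) (hab : orderOf (a * b) ∣ n)
    (hlm : Nat.Coprime l m) (hln : Nat.Coprime l n) (hmn : Nat.Coprime m n) :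
    Subsingleton (Abelianization G) := by
  set φ := Abelianization.of (G := G) with hφ
  set x := φ a with hxdef
  set y := φ b with hydef
  have hx : x ^ l = 1 := orderOf_dvd_iff_pow_eq_one.mp ((orderOf_map_dvd φ a).trans ha)
  have hy : y ^ m = 1 := orderOf_dvd_iff_pow_eq_one.mp ((orderOf_map_dvd φ b).trans hb)
  have hxy : x ^ n * y ^ n = 1 := by
    have h := orderOf_dvd_iff_pow_eq_one.mp ((orderOf_map_dvd φ (a * b)).trans hab)
    rwa [map_mul, mul_pow] at h
  have hyn : y ^ n = (x ^ n)⁻¹ := eq_inv_of_mul_eq_one_left (by rw [mul_comm]; exact hxy)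
  have hynl : y ^ (n * l) = 1 := by
    rw [pow_mul, hyn, inv_pow, ← pow_mul, mul_comm n l, pow_mul, hx, one_pow, inv_one]
  have hy1 : y = 1 := by
    rw [← orderOf_eq_one_iff]
    have h1 : orderOf y ∣ m := orderOf_dvd_of_pow_eq_one hy
    have h2 : orderOf y ∣ n * l := orderOf_dvd_of_pow_eq_one hynl
    exact Nat.eq_one_of_dvd_coprimes (hmn.mul_right hlm.symm) h1 h2
  have hxn : x ^ n = 1 := by rw [← inv_inv (x ^ n), ← hyn, hy1, one_pow, inv_one]
  have hx1 : x = 1 := by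
    rw [← orderOf_eq_one_iff]
    exact Nat.eq_one_of_dvd_coprimes hln (orderOf_dvd_of_pow_eq_one hx)
      (orderOf_dvd_of_pow_eq_one hxn)
  have hall : ∀ g : G, φ g = 1 := by
    intro g
    have hg : g ∈ Subgroup.closure ({a, b} : Set G) := hgen ▸ Subgroup.mem_top g
    induction hg using Subgroup.closure_induction with
    | mem z hz =>
      rcases hz with hz | hz
      · rw [hz]; exact hx1
      · rw [hz]; exact hy1
    | one => exact map_one φ
    | mul u v _ _ hu hv => rw [map_mul, hu, hv, one_mul]
    | inv u _ hu => rw [map_inv, hu, inv_one]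
  constructor
  intro g h
  induction g using QuotientGroup.induction_on with | _ g' =>
  induction h using QuotientGroup.induction_on with | _ h' =>
  show φ g' = φ h'
  rw [hall g', hall h']
end

section
/- Let G be a group generated by two elements a and b with orders of a, b, and a*b dividing pairwise coprime integers l, m, n. Then G has no nontrivial solvable quotient: any surjective homomorphism from G onto a solvable group has trivial image. -/
/-!
The abelianization of `G` is generated by the images `x`, `y` of `a`, `b`, and there the orders of
`x` and `y` are coprime, so `x * y` has order `orderOf x * orderOf y`, which divides `n`. Coprimality
with `l` and `m` forces `x = y = 1`, so `G` is perfect. Perfection passes to quotients, and a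
nontrivial perfect group is never solvable.
-/

theorem Commute.eq_one_of_orderOf_dvd_of_coprime {M : Type*} [Monoid M] {x y : M} {l m n : ℕ}
    (hxy : Commute x y) (hx : orderOf x ∣ l) (hy : orderOf y ∣ m) (hxy_n : orderOf (x * y) ∣ n)
    (hlm : l.Coprime m) (hln : l.Coprime n) : x = 1 := by
  have hmul : orderOf (x * y) = orderOf x * orderOf y :=
    hxy.orderOf_mul_eq_mul_orderOf_of_coprime (hlm.of_dvd hx hy)
  have hxn : orderOf x ∣ n := (Dvd.intro _ hmul.symm).trans hxy_n
  exact orderOf_eq_one_iff.mp (Nat.eq_one_of_dvd_coprimes hln hx hxn)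

theorem Group.isPerfect_of_closure_pair_eq_top_of_orderOf_dvd_coprime {G : Type*} [Group G]
    {a b : G} {l m n : ℕ} (hgen : Subgroup.closure ({a, b} : Set G) = ⊤)
    (ha : orderOf a ∣ l) (hb : orderOf b ∣ m) (hab : orderOf (a * b) ∣ n)
    (hlm : l.Coprime m) (hln : l.Coprime n) (hmn : m.Coprime n) : Group.IsPerfect G := by
  set x : Abelianization G := Abelianization.of a
  set y : Abelianization G := Abelianization.of b
  have hx : orderOf x ∣ l := (orderOf_map_dvd _ a).trans ha
  have hy : orderOf y ∣ m := (orderOf_map_dvd _ b).trans hb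
  have hxy : orderOf (x * y) ∣ n := by
    simpa only [x, y, map_mul] using (orderOf_map_dvd Abelianization.of (a * b)).trans hab
  have hx_one : x = 1 := (Commute.all x y).eq_one_of_orderOf_dvd_of_coprime hx hy hxy hlm hln
  have hy_one : y = 1 :=
    (Commute.all y x).eq_one_of_orderOf_dvd_of_coprime hy hx (mul_comm x y ▸ hxy) hlm.symm hmn
  have hof : (Abelianization.of : G →* Abelianization G) = 1 := by
    refine MonoidHom.eq_of_eqOn_dense hgen ?_
    rintro g (rfl | rfl)
    exacts [hx_one, hy_one]
  rw [isPerfect_def, ← Abelianization.ker_of, hof, MonoidHom.ker_one]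

theorem stmt_1 {G : Type*} [Group G] (a b : G) (l m n : ℕ)
    (hgen : Subgroup.closure ({a, b} : Set G) = ⊤)
    (ha : orderOf a ∣ l) (hb : orderOf b ∣ m) (hab : orderOf (a * b) ∣ n)
    (hlm : Nat.Coprime l m) (hln : Nat.Coprime l n) (hmn : Nat.Coprime m n)
    (S : Type*) [Group S] [Group.IsSolvable S] (f : G →* S) (hf : Function.Surjective f) :
    Subsingleton S := by
  have : Group.IsPerfect G :=
    Group.isPerfect_of_closure_pair_eq_top_of_orderOf_dvd_coprime hgen ha hb hab hlm hln hmn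
  have : Group.IsPerfect S := Group.IsPerfect.ofSurjective hf
  exact not_nontrivial_iff_subsingleton.mp fun _ ↦ Group.IsPerfect.not_isSolvable S ‹_›
end

section
/- (Ree's inequality, special case s = 3) Let g₁, g₂, g₃ be permutations of a finite set of n elements generating a transitive group, with g₁g₂g₃ = 1. If cᵢ denotes the number of cycles of gᵢ (including fixed points), then c₁ + c₂ + c₃ ≤ n + 2. -/
/-- The number of cycles (including fixed points) of a permutation `g`,
counted as the number of orbits of the cyclic subgroup generated by `g`. -/
noncomputable def cyclesCount {X : Type*} (g : Equiv.Perm X) : ℕ :=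
  Nat.card (MulAction.orbitRel.Quotient (Subgroup.zpowers g) X)

/-!
Let `V = K^X` with `g` acting by `v ↦ v ∘ g`, and `Rᵢ = (gᵢ - 1)V`. Functions fixed by `g` are
those constant on its cycles, so `dim Rᵢ ≤ n - cᵢ`, and it suffices to show
`dim R₁ + dim R₂ + dim R₃ ≥ 2n - 2`. The maps `f : V → R₁ × R₂ × R₃`, `v ↦ ((gᵢ - 1)v)ᵢ`, and
`h : R₁ × R₂ × R₃ → V`, `(a, b, c) ↦ a ∘ g₂g₃ + b ∘ g₃ + c`, satisfy `h ∘ f = 0`, since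
`v ∘ g₁g₂g₃ - v` telescopes. By transitivity, `ker f` consists of constant functions, and the
image of `h` contains `(w - 1)V` for every `w` in the group, hence every difference `eₓ - e_y`
of basis vectors; so both `f` and `h` have rank at least `n - 1`.
-/

open Equiv LinearMap Module Submodule MulAction

theorem LinearMap.finrank_range_add_finrank_range_le_of_comp_eq_zero {K U V W : Type*} [Field K]
    [AddCommGroup U] [Module K U] [AddCommGroup V] [Module K V] [FiniteDimensional K V]
    [AddCommGroup W] [Module K W] {f : U →ₗ[K] V} {h : V →ₗ[K] W} (hhf : h ∘ₗ f = 0) :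
    finrank K (range f) + finrank K (range h) ≤ finrank K V := by
  rw [← finrank_range_add_finrank_ker h, add_comm]
  gcongr
  exact finrank_mono (range_le_ker_iff.2 hhf)

theorem Subgroup.closure_le_closure_of_mul_mul_eq_one {G : Type*} [Group G] {a b c : G}
    (habc : a * b * c = 1) : closure {a, b, c} ≤ closure {a, c} := by
  have hb : b = a⁻¹ * c⁻¹ := by
    rw [eq_inv_mul_iff_mul_eq]; exact eq_inv_of_mul_eq_one_left habc
  rw [closure_le]
  rintro s (rfl | rfl | rfl)
  · exact subset_closure (by simp)
  · rw [hb]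
    exact mul_mem (inv_mem (subset_closure (by simp))) (inv_mem (subset_closure (by simp)))
  · exact subset_closure (by simp)

namespace Ree

variable {K X : Type*} [Field K]

variable (K) in
noncomputable def diff (g : Perm X) : (X → K) →ₗ[K] (X → K) :=
  funLeft K K g - LinearMap.id

@[simp]
theorem diff_apply (g : Perm X) (v : X → K) (x : X) : diff K g v x = v (g x) - v x := rfl

theorem diff_eq_zero_iff {g : Perm X} {v : X → K} : diff K g v = 0 ↔ v ∘ g = v := by
  simp [funext_iff, sub_eq_zero]

@[simp]
theorem diff_one : diff K (1 : Perm X) = 0 := by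
  ext; simp

theorem diff_mul (a b : Perm X) (v : X → K) :
    diff K (a * b) v = diff K b (v ∘ a) + diff K a v := by
  ext x; simp

theorem diff_inv (a : Perm X) (v : X → K) : diff K a⁻¹ v = -diff K a (v ∘ ⇑a⁻¹) := by
  ext x; simp

theorem range_diff_le_of_mem_closure {S : Set (Perm X)} {M : Submodule K (X → K)}
    (hS : ∀ s ∈ S, range (diff K s) ≤ M) {w : Perm X} (hw : w ∈ Subgroup.closure S) :
    range (diff K w) ≤ M := by
  induction hw using Subgroup.closure_induction with
  | mem s hs => exact hS s hs
  | one => simp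
  | mul a b _ _ ha hb =>
    rintro _ ⟨v, rfl⟩
    rw [diff_mul]
    exact M.add_mem (hb (mem_range_self _ _)) (ha (mem_range_self _ _))
  | inv a _ ha =>
    rintro _ ⟨v, rfl⟩
    rw [diff_inv]
    exact M.neg_mem (ha (mem_range_self _ _))

theorem comp_eq_of_mem_closure {Y : Type*} {S : Set (Perm X)} {v : X → Y}
    (hS : ∀ s ∈ S, v ∘ s = v) {w : Perm X} (hw : w ∈ Subgroup.closure S) : v ∘ w = v := by
  induction hw using Subgroup.closure_induction with
  | mem s hs => exact hS s hs
  | one => rfl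
  | mul a b _ _ ha hb => rw [Perm.coe_mul, ← Function.comp_assoc, ha, hb]
  | inv a _ ha => rw [← ha, Function.comp_assoc, ← Perm.coe_mul, mul_inv_cancel, Perm.coe_one,
      Function.comp_id, ha]

theorem apply_eq_of_forall_comp_eq (G : Subgroup (Perm X)) [IsPretransitive G X] {Y : Type*}
    {v : X → Y} (hv : ∀ w ∈ G, v ∘ w = v) (x y : X) : v x = v y := by
  obtain ⟨w, rfl⟩ := exists_smul_eq G x y
  exact (congrFun (hv w w.2) x).symm

theorem finrank_le_one_of_forall_eq {N : Submodule K (X → K)} (hN : ∀ v ∈ N, ∀ x y, v x = v y) :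
    finrank K N ≤ 1 := by
  have hle : N ≤ K ∙ (fun _ => 1) := by
    intro v hv
    rcases isEmpty_or_nonempty X with hX | ⟨⟨x₀⟩⟩
    · simp [Subsingleton.elim v 0]
    · exact mem_span_singleton.2 ⟨v x₀, funext fun x => by simp [hN v hv x₀ x]⟩
  exact (finrank_mono hle).trans <| (finrank_span_le_card _).trans (by simp)

variable [Fintype X]

theorem card_le_finrank_add_one (G : Subgroup (Perm X)) [IsPretransitive G X]
    {M : Submodule K (X → K)} (hM : ∀ w ∈ G, range (diff K w) ≤ M) :
    Fintype.card X ≤ finrank K M + 1 := by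
  classical
  rcases isEmpty_or_nonempty X with hX | ⟨⟨x₀⟩⟩
  · simp
  let e : X → X → K := fun x => Pi.single x 1
  have he : ∀ x, e x ∈ M ⊔ K ∙ e x₀ := by
    intro x
    obtain ⟨w, hw⟩ := exists_smul_eq G x x₀
    have hdiff : diff K w (e x₀) = e x - e x₀ := by
      ext y
      simp [e, Pi.single_apply, ← hw, Subgroup.smul_def]
    rw [← sub_add_cancel (e x) (e x₀), ← hdiff]
    exact add_mem (mem_sup_left (hM w w.2 (mem_range_self _ _)))
      (mem_sup_right (mem_span_singleton_self _))
  have htop : M ⊔ K ∙ e x₀ = ⊤ := by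
    rw [eq_top_iff, ← (Pi.basisFun K X).span_eq, span_le]
    rintro _ ⟨x, rfl⟩
    simpa using he x
  calc Fintype.card X = finrank K ↥(M ⊔ K ∙ e x₀) := by
        rw [htop, finrank_top, finrank_fintype_fun_eq_card]
    _ ≤ finrank K M + finrank K (K ∙ e x₀) := finrank_add_le_finrank_add_finrank _ _
    _ ≤ finrank K M + 1 := by gcongr; exact (finrank_span_le_card _).trans (by simp)

theorem cyclesCount_le_finrank_ker_diff (g : Perm X) :
    cyclesCount g ≤ finrank K (ker (diff K g)) := by
  let Q := orbitRel.Quotient (Subgroup.zpowers g) X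
  let _ : Fintype Q := Fintype.ofFinite Q
  let Φ : (Q → K) →ₗ[K] (X → K) := funLeft K K Quotient.mk''
  have hΦ : range Φ ≤ ker (diff K g) := by
    rintro _ ⟨f, rfl⟩
    rw [mem_ker, diff_eq_zero_iff]
    ext x
    simp only [Function.comp_apply, Φ, funLeft_apply]
    congr 1
    exact Quotient.sound' (mem_orbit x (⟨g, Subgroup.mem_zpowers g⟩ : Subgroup.zpowers g))
  calc cyclesCount g = finrank K (Q → K) := by
        rw [finrank_fintype_fun_eq_card, cyclesCount, Nat.card_eq_fintype_card]
    _ = finrank K (range Φ) :=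
        (finrank_range_of_inj (funLeft_injective_of_surjective _ _ _ Quotient.mk''_surjective)).symm
    _ ≤ finrank K (ker (diff K g)) := finrank_mono hΦ

theorem cyclesCount_add_finrank_range_diff_le (g : Perm X) :
    cyclesCount g + finrank K (range (diff K g)) ≤ Fintype.card X := by
  rw [← finrank_fintype_fun_eq_card K, ← finrank_range_add_finrank_ker (diff K g), add_comm]
  exact Nat.add_le_add_left (cyclesCount_le_finrank_ker_diff g) _

theorem two_mul_card_le_sum_finrank_range_diff {g₁ g₂ g₃ : Perm X} (hprod : g₁ * g₂ * g₃ = 1)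
    [IsPretransitive (Subgroup.closure ({g₁, g₂, g₃} : Set (Perm X))) X] :
    2 * Fintype.card X ≤ finrank K (range (diff K g₁)) + finrank K (range (diff K g₂)) +
      finrank K (range (diff K g₃)) + 2 := by
  set G := Subgroup.closure ({g₁, g₂, g₃} : Set (Perm X))
  set R₁ := range (diff K g₁)
  set R₂ := range (diff K g₂)
  set R₃ := range (diff K g₃)
  have hx : ∀ x, g₁ (g₂ (g₃ x)) = x := fun x => by
    rw [← Perm.mul_apply, ← Perm.mul_apply, hprod, Perm.one_apply]
  let f : (X → K) →ₗ[K] R₁ × R₂ × R₃ :=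
    (diff K g₁).rangeRestrict.prod ((diff K g₂).rangeRestrict.prod (diff K g₃).rangeRestrict)
  let h : R₁ × R₂ × R₃ →ₗ[K] (X → K) :=
    (funLeft K K (g₂ * g₃) ∘ₗ R₁.subtype).coprod ((funLeft K K g₃ ∘ₗ R₂.subtype).coprod R₃.subtype)
  have hhf : h ∘ₗ f = 0 := by
    ext v x
    simp [f, h, hx]
  have hker : finrank K (ker f) ≤ 1 := by
    refine finrank_le_one_of_forall_eq fun v hv =>
      apply_eq_of_forall_comp_eq G fun w hw => comp_eq_of_mem_closure ?_ hw
    rw [ker_prod, ker_prod, ker_rangeRestrict, ker_rangeRestrict, ker_rangeRestrict] at hv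
    simp only [mem_inf, mem_ker, diff_eq_zero_iff] at hv
    simpa [or_imp, forall_and] using hv
  have hrange : Fintype.card X ≤ finrank K (range h) + 1 := by
    refine card_le_finrank_add_one G fun w hw =>
      range_diff_le_of_mem_closure ?_ (Subgroup.closure_le_closure_of_mul_mul_eq_one hprod hw)
    rintro s (rfl | rfl) _ ⟨u, rfl⟩
    · exact ⟨(⟨diff K s (u ∘ s), mem_range_self _ _⟩, 0, 0), by ext x; simp [h, hx]⟩
    · exact ⟨(0, 0, ⟨diff K s u, mem_range_self _ _⟩), by simp [h]⟩
  have hcomplex := finrank_range_add_finrank_range_le_of_comp_eq_zero hhf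
  have hf := finrank_range_add_finrank_ker f
  rw [finrank_prod, finrank_prod] at hcomplex
  rw [finrank_fintype_fun_eq_card] at hf
  omega

end Ree

theorem stmt_10 {X : Type*} [Fintype X] (n : ℕ) (hX : Fintype.card X = n)
    (g₁ g₂ g₃ : Equiv.Perm X) (hprod : g₁ * g₂ * g₃ = 1)
    (htrans : MulAction.IsPretransitive (Subgroup.closure ({g₁, g₂, g₃} : Set (Equiv.Perm X))) X) :
    cyclesCount g₁ + cyclesCount g₂ + cyclesCount g₃ ≤ n + 2 := by
  subst hX
  have := Ree.cyclesCount_add_finrank_range_diff_le (K := ℚ) g₁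
  have := Ree.cyclesCount_add_finrank_range_diff_le (K := ℚ) g₂
  have := Ree.cyclesCount_add_finrank_range_diff_le (K := ℚ) g₃
  have := Ree.two_mul_card_le_sum_finrank_range_diff (K := ℚ) hprod
  omega
end

section
/- If g₁, g₂, g₃ are permutations of a 100-element set with g₁g₂g₃ = 1, where g₁ has cycle type 1²⁰2⁴⁰ (20 fixed points and 40 transpositions), g₂ has cycle type 1⁴3³² (4 fixed points and 32 three-cycles), and g₃ has cycle type 1²7¹⁴ (2 fixed points and 14 seven-cycles), then the group generated by g₁, g₂, g₃ is not transitive on the 100 points. -/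
/-!
Ree's inequality, by the linear-algebra argument of Feit–Lyndon–Scott. A permutation `g` acts on
`V = ℚ^X` by `f ↦ f ∘ g`, and `range (g - 1)` has dimension `n - c(g)`, where `c(g)` counts the
cycles of `g` including fixed points. When `g₁ g₂ g₃ = 1`, the terms of the telescoping sum
`g₃g₂g₁ - 1 = (g₁ - 1) + (g₂ - 1)g₁ + (g₃ - 1)g₂g₁` define a map `V → ⊕ range (gᵢ - 1)` whose
composite with the addition map is zero; comparing ranks gives
`n + dim ∑ range (gᵢ - 1) ≤ ∑ (n - c(gᵢ)) + dim (common fixed vectors)`.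
Transitivity makes the common fixed vectors the constants and `∑ range (gᵢ - 1)` of codimension
at most one, hence `∑ c(gᵢ) ≤ n + 2`, whereas here `60 + 36 + 16 > 102`.
-/

open LinearMap Module Finset

section LinearAlgebra

variable {K V : Type*} [Field K] [AddCommGroup V] [Module K V] [FiniteDimensional K V]

theorem Module.End.finrank_add_finrank_sup_range_sub_one_le {f₁ f₂ f₃ : Module.End K V}
    (h : f₃ * f₂ * f₁ = 1) :
    finrank K V + finrank K ↥(range (f₁ - 1) ⊔ range (f₂ - 1) ⊔ range (f₃ - 1)) ≤
      finrank K (range (f₁ - 1)) + finrank K (range (f₂ - 1)) + finrank K (range (f₃ - 1)) +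
        finrank K ↥(ker (f₁ - 1) ⊓ ker (f₂ - 1) ⊓ ker (f₃ - 1)) := by
  set α := (f₁ - 1).rangeRestrict.prod
    (((f₂ - 1).rangeRestrict ∘ₗ f₁).prod ((f₃ - 1).rangeRestrict ∘ₗ (f₂ * f₁)))
  set π := (range (f₁ - 1)).subtype.coprod
    ((range (f₂ - 1)).subtype.coprod (range (f₃ - 1)).subtype)
  have hπα : π ∘ₗ α = 0 := by
    ext v
    have hv : f₃ (f₂ (f₁ v)) = v := congr($h v)
    simp [α, π, hv]
  have hrange : range π = range (f₁ - 1) ⊔ range (f₂ - 1) ⊔ range (f₃ - 1) := by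
    simp only [π, range_coprod, Submodule.range_subtype, sup_assoc]
  have hker : ker α ≤ ker (f₁ - 1) ⊓ ker (f₂ - 1) ⊓ ker (f₃ - 1) := by
    intro v hv
    simp only [α, comp_codRestrict, ker_prod, ker_codRestrict, Submodule.mem_inf, mem_ker,
      LinearMap.sub_apply, one_apply, sub_eq_zero, coe_comp, Function.comp_apply, mul_apply] at hv
    obtain ⟨h₁, h₂, h₃⟩ := hv
    rw [h₁] at h₂
    rw [h₁, h₂] at h₃
    simp [h₁, h₂, h₃]
  have hα := α.finrank_range_add_finrank_ker
  have hπ := π.finrank_range_add_finrank_ker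
  have h₁ := Submodule.finrank_mono (range_le_ker_iff.mpr hπα)
  have h₂ := Submodule.finrank_mono hker
  rw [hrange, finrank_prod, finrank_prod] at hπ
  omega

end LinearAlgebra

section FunLeft

variable {K X : Type*} [Field K] [Fintype X]

theorem card_le_finrank_ker_funLeft_sub_one {ι : Type*} [Fintype ι] {σ : X → X} {p : X → ι}
    (hp : Function.Surjective p) (hσ : p ∘ σ = p) :
    Fintype.card ι ≤ finrank K (ker (funLeft K K σ - 1)) := by
  let L := (funLeft K K p).codRestrict (ker (funLeft K K σ - 1)) fun w ↦ by
    ext x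
    simp [show p (σ x) = p x from congrFun hσ x]
  have hL : Function.Injective L := fun v w hvw ↦
    funLeft_injective_of_surjective K K p hp (congrArg Subtype.val hvw)
  simpa using L.finrank_le_finrank_of_injective hL

end FunLeft

namespace Equiv.Perm

variable {X : Type*} [Fintype X] [DecidableEq X]

def cycleLabel (σ : Perm X) (x : X) : ↥σ.supportᶜ ⊕ ↥σ.cycleFactorsFinset :=
  if hx : x ∈ σ.support then .inr ⟨σ.cycleOf x, cycleOf_mem_cycleFactorsFinset_iff.mpr hx⟩
  else .inl ⟨x, Finset.mem_compl.mpr hx⟩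

theorem cycleLabel_surjective (σ : Perm X) : Function.Surjective σ.cycleLabel := by
  rintro (⟨x, hx⟩ | ⟨c, hc⟩)
  · exact ⟨x, dif_neg (Finset.mem_compl.mp hx)⟩
  · obtain ⟨x, hx⟩ := (mem_cycleFactorsFinset_iff.mp hc).1.nonempty_support
    refine ⟨x, ?_⟩
    rw [cycleLabel, dif_pos (mem_cycleFactorsFinset_support_le hc hx)]
    simp [← cycle_is_cycleOf hx hc]

theorem cycleLabel_comp_self (σ : Perm X) : σ.cycleLabel ∘ σ = σ.cycleLabel := by
  ext x
  by_cases hx : x ∈ σ.support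
  · simp [cycleLabel, mem_support.mp hx, cycleOf_self_apply]
  · simp [cycleLabel, notMem_support.mp hx]

variable {K : Type*} [Field K]

theorem finrank_range_funLeft_sub_one_add_card_cycleType_le (σ : Perm X) :
    finrank K (range (funLeft K K σ - 1)) + Multiset.card σ.cycleType ≤ σ.cycleType.sum := by
  have hker := card_le_finrank_ker_funLeft_sub_one (K := K) σ.cycleLabel_surjective
    σ.cycleLabel_comp_self
  have hcycles : Multiset.card σ.cycleType = #σ.cycleFactorsFinset := by
    rw [cycleType_def, Multiset.card_map]
    rfl
  have hrank := (funLeft K K σ - 1).finrank_range_add_finrank_ker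
  rw [Fintype.card_sum, Fintype.card_coe, Fintype.card_coe, Finset.card_compl] at hker
  rw [finrank_fintype_fun_eq_card] at hrank
  have := σ.support.card_le_univ
  rw [hcycles, sum_cycleType]
  omega

end Equiv.Perm

section Transitive

variable {X : Type*} {s : Set (Equiv.Perm X)} [MulAction.IsPretransitive (Subgroup.closure s) X]

theorem apply_eq_apply_of_comp_eq_self {β : Type*} {φ : X → β} (hφ : ∀ g ∈ s, φ ∘ g = φ)
    (x y : X) : φ x = φ y := by
  obtain ⟨⟨g, hg⟩, rfl⟩ := MulAction.exists_smul_eq (Subgroup.closure s) x y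
  have hφg : φ ∘ g = φ := by
    induction hg using Subgroup.closure_induction with
    | mem g hg => exact hφ g hg
    | one => rfl
    | mul g h _ _ hg hh => rw [Equiv.Perm.coe_mul, ← Function.comp_assoc, hg, hh]
    | inv g _ hg =>
      conv_lhs => rw [← hg]
      rw [Function.comp_assoc, ← Equiv.Perm.coe_mul, mul_inv_cancel, Equiv.Perm.coe_one,
        Function.comp_id]
  exact (congrFun hφg x).symm

variable {K : Type*} [Field K] [Nonempty X]

theorem finrank_le_one_of_le_ker_funLeft_sub_one {F : Submodule K (X → K)}
    (hF : ∀ g ∈ s, F ≤ ker (funLeft K K g - 1)) : finrank K F ≤ 1 := by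
  obtain ⟨x₀⟩ := ‹Nonempty X›
  have hconst : F ≤ K ∙ (1 : X → K) := fun v hv ↦ by
    have hv' (g : Equiv.Perm X) (hg : g ∈ s) : v ∘ g = v :=
      sub_eq_zero.mp (mem_ker.mp (hF g hg hv))
    refine Submodule.mem_span_singleton.mpr ⟨v x₀, funext fun x ↦ ?_⟩
    simp [apply_eq_apply_of_comp_eq_self (s := s) hv' x₀ x]
  calc finrank K F ≤ finrank K (K ∙ (1 : X → K)) := Submodule.finrank_mono hconst
    _ = 1 := finrank_span_singleton one_ne_zero

variable [Fintype X]

theorem card_le_finrank_add_one_of_range_funLeft_sub_one_le {S : Submodule K (X → K)}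
    (hS : ∀ g ∈ s, range (funLeft K K g - 1) ≤ S) : Fintype.card X ≤ finrank K S + 1 := by
  classical
  obtain ⟨x₀⟩ := ‹Nonempty X›
  have hq (g : Equiv.Perm X) (hg : g ∈ s) (f : X → K) : S.mkQ (funLeft K K g f) = S.mkQ f :=
    (Submodule.Quotient.eq S).mpr (hS g hg ⟨f, rfl⟩)
  have hconst (x : X) : S.mkQ (Pi.single x 1) = S.mkQ (Pi.single x₀ 1) := by
    refine apply_eq_apply_of_comp_eq_self (s := s) (φ := fun x ↦ S.mkQ (Pi.single x 1))
      (fun g hg ↦ funext fun y ↦ ?_) x x₀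
    rw [Function.comp_apply, ← hq g hg]
    congr 1
    ext z
    simp [Pi.single_apply, g.injective.eq_iff]
  have hquot : finrank K ((X → K) ⧸ S) ≤ 1 := by
    refine finrank_le_one (S.mkQ (Pi.single x₀ 1)) fun w ↦ ?_
    obtain ⟨f, rfl⟩ := S.mkQ_surjective w
    refine ⟨∑ x, f x, ?_⟩
    conv_rhs => rw [pi_eq_sum_univ' f]
    simp [Finset.sum_smul, hconst]
  have := S.finrank_quotient_add_finrank
  rw [finrank_fintype_fun_eq_card] at this
  omega

end Transitive

theorem stmt_11 {X : Type*} [Fintype X] [DecidableEq X] (hX : Fintype.card X = 100)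
    (g₁ g₂ g₃ : Equiv.Perm X) (hprod : g₁ * g₂ * g₃ = 1)
    (h₁ : g₁.cycleType = Multiset.replicate 40 2)
    (h₂ : g₂.cycleType = Multiset.replicate 32 3)
    (h₃ : g₃.cycleType = Multiset.replicate 14 7) :
    ¬ MulAction.IsPretransitive (Subgroup.closure ({g₁, g₂, g₃} : Set (Equiv.Perm X))) X := by
  intro _
  have : Nonempty X := Fintype.card_pos_iff.mp (by omega)
  have hfunLeft : funLeft ℚ ℚ g₃ * funLeft ℚ ℚ g₂ * funLeft ℚ ℚ g₁ = 1 :=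
    congrArg (fun g : Equiv.Perm X ↦ funLeft ℚ ℚ g) hprod
  have hRee := Module.End.finrank_add_finrank_sup_range_sub_one_le hfunLeft
  have hsup := card_le_finrank_add_one_of_range_funLeft_sub_one_le (s := {g₁, g₂, g₃})
    (S := range (funLeft ℚ ℚ g₁ - 1) ⊔ range (funLeft ℚ ℚ g₂ - 1) ⊔ range (funLeft ℚ ℚ g₃ - 1))
    (by rintro g (rfl | rfl | rfl)
        exacts [le_sup_left.trans le_sup_left, le_sup_right.trans le_sup_left, le_sup_right])
  have hinf := finrank_le_one_of_le_ker_funLeft_sub_one (s := {g₁, g₂, g₃})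
    (F := ker (funLeft ℚ ℚ g₁ - 1) ⊓ ker (funLeft ℚ ℚ g₂ - 1) ⊓ ker (funLeft ℚ ℚ g₃ - 1))
    (by rintro g (rfl | rfl | rfl)
        exacts [inf_le_left.trans inf_le_left, inf_le_left.trans inf_le_right, inf_le_right])
  have r₁ := Equiv.Perm.finrank_range_funLeft_sub_one_add_card_cycleType_le (K := ℚ) g₁
  have r₂ := Equiv.Perm.finrank_range_funLeft_sub_one_add_card_cycleType_le (K := ℚ) g₂
  have r₃ := Equiv.Perm.finrank_range_funLeft_sub_one_add_card_cycleType_le (K := ℚ) g₃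
  simp only [h₁, h₂, h₃, Multiset.card_replicate, Multiset.sum_replicate, smul_eq_mul] at r₁ r₂ r₃
  rw [finrank_fintype_fun_eq_card] at hRee
  omega
end

section
/- If a permutation group G acts transitively on a finite set X and is generated by permutations g₁, …, g_s with g₁⋯g_s = 1, and gᵢ has cᵢ cycles on X, then c₁ + ⋯ + c_s ≤ (s − 2)·|X| + 2. -/
open Module LinearMap

lemma Fin.sum_succ_sub_castSucc {M : Type*} [AddCommGroup M] {n : ℕ} (f : Fin (n + 1) → M) :
    ∑ i : Fin n, (f i.succ - f i.castSucc) = f (Fin.last n) - f 0 := by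
  induction n with
  | zero => simp
  | succ n ih =>
    rw [Fin.sum_univ_castSucc]
    simp only [Fin.succ_castSucc]
    rw [ih (fun i => f i.castSucc)]
    simp

namespace Representation

variable {k G V : Type*} [CommRing k] [Group G] [AddCommGroup V] [Module k V]
  (ρ : Representation k G V)

lemma mem_invariants_comp_closure_subtype {S : Set G} {v : V} (h : ∀ g ∈ S, ρ g v = v) :
    v ∈ invariants (ρ.comp (Subgroup.closure S).subtype) := by
  rintro ⟨g, hg⟩
  induction hg using Subgroup.closure_induction with
  | mem g hg => exact h g hg
  | one => simp
  | mul g₁ g₂ _ _ h₁ h₂ => simp_all [Module.End.mul_apply]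
  | inv g _ hg =>
    simp only [MonoidHom.comp_apply, Subgroup.coe_subtype] at hg ⊢
    exact ρ.inv_apply_eq_iff.mpr hg.symm

lemma ker_sub_one_eq_invariants_zpowers (g : G) :
    ker (ρ g - 1) = invariants (ρ.comp (Subgroup.zpowers g).subtype) := by
  ext v
  simp only [mem_ker, LinearMap.sub_apply, Module.End.one_apply, sub_eq_zero]
  refine ⟨fun hv => ?_, fun hv => hv ⟨g, Subgroup.mem_zpowers g⟩⟩
  rw [Subgroup.zpowers_eq_closure]
  exact ρ.mem_invariants_comp_closure_subtype (by simpa using hv)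

section Scott

variable {s : ℕ} (g : Fin s → G)

-- The maps `Ψ` and `Φ` of Scott's proof.
noncomputable def scottDiff : V →ₗ[k] ∀ i, range (ρ (g i) - 1) :=
  LinearMap.pi fun i => (ρ (g i) - 1).rangeRestrict

noncomputable def scottSum : (∀ i, range (ρ (g i) - 1)) →ₗ[k] V :=
  ∑ i, ρ (Fin.partialProd g i.castSucc) ∘ₗ (range (ρ (g i) - 1)).subtype ∘ₗ proj i

lemma scottSum_apply (v : ∀ i, range (ρ (g i) - 1)) :
    ρ.scottSum g v = ∑ i, ρ (Fin.partialProd g i.castSucc) (v i) := by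
  simp [scottSum]

lemma scottSum_single (i : Fin s) (v : range (ρ (g i) - 1)) :
    ρ.scottSum g (Pi.single i v) = ρ (Fin.partialProd g i.castSucc) v := by
  rw [scottSum_apply, Finset.sum_eq_single i (fun j _ hj => by simp [hj]) (by simp)]
  simp

lemma scottSum_comp_scottDiff (hg : (List.ofFn g).prod = 1) :
    ρ.scottSum g ∘ₗ ρ.scottDiff g = 0 := by
  ext v
  have hlast : Fin.partialProd g (Fin.last s) = 1 := by
    simpa [Fin.partialProd, List.take_of_length_le] using hg
  have htel (i : Fin s) : ρ (Fin.partialProd g i.castSucc) ((ρ (g i) - 1) v) =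
      ρ (Fin.partialProd g i.succ) v - ρ (Fin.partialProd g i.castSucc) v := by
    simp [Fin.partialProd_succ, Module.End.mul_apply]
  simp only [comp_apply, scottSum_apply, scottDiff, pi_apply, codRestrict_apply, htel]
  rw [Fin.sum_succ_sub_castSucc (fun j => ρ (Fin.partialProd g j) v), hlast]
  simp

lemma ker_scottDiff_le :
    ker (ρ.scottDiff g) ≤ invariants (ρ.comp (Subgroup.closure (Set.range g)).subtype) := by
  intro v hv
  refine ρ.mem_invariants_comp_closure_subtype ?_
  rintro _ ⟨i, rfl⟩
  have := congr_arg Subtype.val (congr_fun hv i)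
  simpa [scottDiff, sub_eq_zero] using this

lemma apply_partialProd_eq_of_mem_dualAnnihilator {l : Dual k V}
    (hl : l ∈ (range (ρ.scottSum g)).dualAnnihilator) (j : Fin (s + 1)) (v : V) :
    l (ρ (Fin.partialProd g j) v) = l v := by
  rw [Submodule.mem_dualAnnihilator] at hl
  induction j using Fin.induction with
  | zero => simp
  | succ i ih =>
    have := hl _ ⟨Pi.single i ((ρ (g i) - 1).rangeRestrict v), rfl⟩
    simp only [scottSum_single, codRestrict_apply, LinearMap.sub_apply, Module.End.one_apply,
      map_sub] at this
    rw [Fin.partialProd_succ, map_mul, Module.End.mul_apply, ← ih, ← sub_eq_zero, ← this]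

lemma dualAnnihilator_range_scottSum_le :
    (range (ρ.scottSum g)).dualAnnihilator ≤
      invariants (ρ.dual.comp (Subgroup.closure (Set.range g)).subtype) := by
  intro l hl
  refine ρ.dual.mem_invariants_comp_closure_subtype ?_
  rintro _ ⟨i, rfl⟩
  ext v
  have hcs := ρ.apply_partialProd_eq_of_mem_dualAnnihilator g hl i.castSucc v
  have hsucc := ρ.apply_partialProd_eq_of_mem_dualAnnihilator g hl i.succ (ρ (g i)⁻¹ v)
  rw [Fin.partialProd_succ, map_mul, Module.End.mul_apply, self_inv_apply, hcs] at hsucc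
  simpa [dual_apply, Dual.transpose_apply] using hsucc.symm

end Scott

end Representation

lemma finrank_add_finrank_le_of_comp_eq_zero {K U V W : Type*} [Field K] [AddCommGroup U]
    [Module K U] [AddCommGroup V] [Module K V] [AddCommGroup W] [Module K W]
    [FiniteDimensional K U] [FiniteDimensional K V] [FiniteDimensional K W]
    (ψ : U →ₗ[K] V) (φ : V →ₗ[K] W) (h : φ ∘ₗ ψ = 0) :
    finrank K U + finrank K W ≤
      finrank K V + finrank K (ker ψ) + finrank K (range φ).dualAnnihilator := by
  have hle : range ψ ≤ ker φ := range_le_ker_iff.mpr h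
  have := Submodule.finrank_mono hle
  have := finrank_range_add_finrank_ker ψ
  have := finrank_range_add_finrank_ker φ
  have := Subspace.finrank_add_finrank_dualAnnihilator_eq (range φ)
  omega

section PermRep

variable (k X : Type*) [CommRing k]

noncomputable def permRep : Representation k (Equiv.Perm X) (X → k) where
  toFun σ := funLeft k k σ.symm
  map_one' := rfl
  map_mul' _ _ := rfl

variable {k X}

@[simp]
lemma permRep_apply (σ : Equiv.Perm X) (f : X → k) (x : X) : permRep k X σ f x = f (σ⁻¹ x) :=
  rfl

lemma permRep_single [DecidableEq X] (σ : Equiv.Perm X) (x : X) (c : k) :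
    permRep k X σ (Pi.single x c) = Pi.single (σ x) c := by
  ext y
  simp [Pi.single_apply, Equiv.symm_apply_eq]

lemma range_funLeft_mk_orbitRel (H : Subgroup (Equiv.Perm X)) :
    range (funLeft k k (Quotient.mk (MulAction.orbitRel H X))) =
      Representation.invariants ((permRep k X).comp H.subtype) := by
  ext f
  constructor
  · rintro ⟨f, rfl⟩ τ
    ext x
    simp only [MonoidHom.comp_apply, permRep_apply, funLeft_apply]
    exact congr_arg f (Quotient.sound ⟨τ⁻¹, rfl⟩)
  · intro hf
    refine ⟨Quotient.lift f ?_, rfl⟩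
    rintro _ x ⟨τ, rfl⟩
    simpa [Subgroup.smul_def] using (congr_fun (hf τ) (τ • x)).symm

end PermRep

section FinrankPermRep

variable {k X : Type*} [Field k]

lemma finrank_invariants_permRep_comp_subtype [Finite X] (H : Subgroup (Equiv.Perm X)) :
    finrank k (Representation.invariants ((permRep k X).comp H.subtype)) =
      Nat.card (MulAction.orbitRel.Quotient H X) := by
  have := Fintype.ofFinite (MulAction.orbitRel.Quotient H X)
  rw [← range_funLeft_mk_orbitRel,
    finrank_range_of_inj (funLeft_injective_of_surjective _ _ _ Quotient.mk_surjective),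
    finrank_pi, Nat.card_eq_fintype_card]

lemma finrank_ker_permRep_sub_one [Finite X] (σ : Equiv.Perm X) :
    finrank k (ker (permRep k X σ - 1)) = cyclesCount σ := by
  rw [Representation.ker_sub_one_eq_invariants_zpowers,
    finrank_invariants_permRep_comp_subtype, cyclesCount]

lemma finrank_range_permRep_sub_one_add_cyclesCount [Fintype X] (σ : Equiv.Perm X) :
    finrank k (range (permRep k X σ - 1)) + cyclesCount σ = Fintype.card X := by
  rw [← finrank_ker_permRep_sub_one (k := k), finrank_range_add_finrank_ker, finrank_pi]

lemma finrank_invariants_permRep_le_one [Finite X] (H : Subgroup (Equiv.Perm X))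
    [MulAction.IsPretransitive H X] :
    finrank k (Representation.invariants ((permRep k X).comp H.subtype)) ≤ 1 := by
  have := (MulAction.pretransitive_iff_subsingleton_quotient H X).mp inferInstance
  rw [finrank_invariants_permRep_comp_subtype]
  exact Finite.card_le_one_iff_subsingleton.mpr this

lemma finrank_invariants_dual_permRep_le [Fintype X] (H : Subgroup (Equiv.Perm X)) :
    finrank k (Representation.invariants ((permRep k X).dual.comp H.subtype)) ≤
      finrank k (Representation.invariants ((permRep k X).comp H.subtype)) := by
  classical
  let e := (Pi.basisFun k X).dualBasis.equivFun
  rw [← e.finrank_map_eq]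
  refine Submodule.finrank_mono ?_
  rintro _ ⟨l, hl, rfl⟩ τ
  ext x
  have := congr($(hl τ) (Pi.single x 1))
  simpa [e, Representation.dual_apply, Dual.transpose_apply, permRep_single] using this

end FinrankPermRep

lemma le_sub_two_mul_add_two_of_add_eq_mul {a b s n : ℕ} (hsum : b + a = s * n)
    (hb : 2 * n ≤ b + 2) : a ≤ (s - 2) * n + 2 := by
  obtain _ | _ | s := s <;> simp only [add_mul, one_mul, zero_mul] at hsum <;> grind

theorem stmt_12_general {X : Type*} [Fintype X] (n s : ℕ) (hX : Fintype.card X = n)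
    (g : Fin s → Equiv.Perm X) (hprod : (List.ofFn g).prod = 1)
    (htrans : MulAction.IsPretransitive (Subgroup.closure (Set.range g)) X) :
    ∑ i, cyclesCount (g i) ≤ (s - 2) * n + 2 := by
  set ρ := permRep ℚ X
  set H := Subgroup.closure (Set.range g)
  have hker : finrank ℚ (ker (ρ.scottDiff g)) ≤ 1 :=
    (Submodule.finrank_mono (ρ.ker_scottDiff_le g)).trans (finrank_invariants_permRep_le_one H)
  have hann : finrank ℚ (range (ρ.scottSum g)).dualAnnihilator ≤ 1 :=
    ((Submodule.finrank_mono (ρ.dualAnnihilator_range_scottSum_le g)).trans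
      (finrank_invariants_dual_permRep_le H)).trans (finrank_invariants_permRep_le_one H)
  have hcomplex := finrank_add_finrank_le_of_comp_eq_zero _ _ (ρ.scottSum_comp_scottDiff g hprod)
  rw [finrank_pi, finrank_pi_fintype, hX] at hcomplex
  have hsum : ∑ i, finrank ℚ (range (ρ (g i) - 1)) + ∑ i, cyclesCount (g i) = s * n := by
    simp [← Finset.sum_add_distrib, finrank_range_permRep_sub_one_add_cyclesCount, ρ, hX]
  exact le_sub_two_mul_add_two_of_add_eq_mul hsum (by omega)

theorem stmt_12 {X : Type*} [Fintype X] (n s : ℕ) (hs : 1 ≤ s) (hX : Fintype.card X = n)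
    (g : Fin s → Equiv.Perm X) (hprod : (List.ofFn g).prod = 1)
    (htrans : MulAction.IsPretransitive (Subgroup.closure (Set.range g)) X) :
    ∑ i, cyclesCount (g i) ≤ (s - 2) * n + 2 :=
  stmt_12_general n s hX g hprod htrans
end
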